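/- arXiv:0705.4201 — 6 statements merged into one kernel-verified Lean document; each statement's English description precedes it below -/
import Mathlib

section
/- If G = A ⋊ C is a semidirect product in which the induced action of C on the abelianization A/[A,A] is trivial, then for every m ≥ 1 the m-th term of the lower central series satisfies Γₘ(G) = Γₘ(A) ⋊ Γₘ(C), i.e., Γₘ(G) is generated by Γₘ(A) and Γₘ(C), with Γₘ(G) ∩ A = Γₘ(A). -/
/-!
Work inside `G = N ⊔ H` with `N` normal and `⁅H, N⁆ ≤ ⁅N, N⁆`; for `A ⋊ C` take `N = range inl`,
`H = range inr`, since `⁅inr c, inl a⁆ = inl (φ c a * a⁻¹)`. Write `Xₖ` for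
`X.lowerCentralSeries k` (Mathlib's index is one less than in `Γₖ`: `X₀ = X`).
Two applications of the three subgroups lemma give `⁅Hⱼ, Nᵢ⁆ ≤ N_{i+j+1}`. Hence `N` and `H`
normalize `Nₖ ⊔ Hₖ`, and the commutator of `Nₖ ⊔ Hₖ` with `N ⊔ H` splits into four pieces, each
inside `N_{k+1} ⊔ H_{k+1}`; by induction `Γ(G)ₖ = Nₖ ⊔ Hₖ`. When `N ⊓ H = ⊥`, intersecting with
`N` leaves `Nₖ`.
-/

namespace Subgroup

variable {G : Type*} [Group G]

theorem le_iff_map_mk'_eq_bot {K N : Subgroup G} [N.Normal] :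
    K ≤ N ↔ K.map (QuotientGroup.mk' N) = ⊥ := by
  rw [map_eq_bot_iff, QuotientGroup.ker_mk']

theorem commutator_commutator_le_of_rotate {H₁ H₂ H₃ N : Subgroup G} [N.Normal]
    (h₁ : ⁅⁅H₂, H₃⁆, H₁⁆ ≤ N) (h₂ : ⁅⁅H₃, H₁⁆, H₂⁆ ≤ N) : ⁅⁅H₁, H₂⁆, H₃⁆ ≤ N := by
  simp only [le_iff_map_mk'_eq_bot, map_commutator] at h₁ h₂ ⊢
  exact commutator_commutator_eq_bot_of_rotate h₁ h₂

theorem commutator_sup_left_le_iff {H₁ H₂ K N : Subgroup G} [N.Normal] :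
    ⁅H₁ ⊔ H₂, K⁆ ≤ N ↔ ⁅H₁, K⁆ ≤ N ∧ ⁅H₂, K⁆ ≤ N := by
  simp only [le_iff_map_mk'_eq_bot, map_commutator, map_sup,
    commutator_eq_bot_iff_le_centralizer, sup_le_iff]

theorem commutator_sup_right_le_iff {H K₁ K₂ N : Subgroup G} [N.Normal] :
    ⁅H, K₁ ⊔ K₂⁆ ≤ N ↔ ⁅H, K₁⁆ ≤ N ∧ ⁅H, K₂⁆ ≤ N := by
  simp only [commutator_comm H, commutator_sup_left_le_iff]

theorem commutator_lowerCentralSeries_le (S : Subgroup G) [S.Normal] (i j : ℕ) :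
    ⁅S.lowerCentralSeries i, S.lowerCentralSeries j⁆ ≤ S.lowerCentralSeries (i + j + 1) := by
  induction j generalizing i with
  | zero => rfl
  | succ j ih =>
    rw [lowerCentralSeries_succ, commutator_comm]
    apply commutator_commutator_le_of_rotate
    · rw [commutator_comm S, ← lowerCentralSeries_succ]
      convert ih (i + 1) using 2
      omega
    · exact commutator_mono (ih i) le_rfl

section AlmostDirect

variable {N H : Subgroup G} [N.Normal]

theorem commutator_lowerCentralSeries_le_succ (hHN : ⁅H, N⁆ ≤ N.lowerCentralSeries 1) (i : ℕ) :
    ⁅H, N.lowerCentralSeries i⁆ ≤ N.lowerCentralSeries (i + 1) := by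
  induction i with
  | zero => exact hHN
  | succ i ih =>
    rw [lowerCentralSeries_succ, commutator_comm]
    apply commutator_commutator_le_of_rotate
    · rw [commutator_comm N]
      calc ⁅⁅H, N⁆, N.lowerCentralSeries i⁆
          ≤ ⁅N.lowerCentralSeries 1, N.lowerCentralSeries i⁆ := commutator_mono hHN le_rfl
        _ ≤ N.lowerCentralSeries (i + 1 + 1) := by
          convert N.commutator_lowerCentralSeries_le 1 i using 2
          omega
    · exact commutator_mono ih le_rfl

theorem commutator_lowerCentralSeries_lowerCentralSeries_le (hHN : ⁅H, N⁆ ≤ N.lowerCentralSeries 1)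
    (i j : ℕ) :
    ⁅H.lowerCentralSeries j, N.lowerCentralSeries i⁆ ≤ N.lowerCentralSeries (i + j + 1) := by
  induction j generalizing i with
  | zero => exact commutator_lowerCentralSeries_le_succ hHN i
  | succ j ih =>
    rw [lowerCentralSeries_succ]
    apply commutator_commutator_le_of_rotate
    · rw [commutator_comm]
      calc ⁅H.lowerCentralSeries j, ⁅H, N.lowerCentralSeries i⁆⁆
          ≤ ⁅H.lowerCentralSeries j, N.lowerCentralSeries (i + 1)⁆ :=
            commutator_mono le_rfl (commutator_lowerCentralSeries_le_succ hHN i)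
        _ ≤ N.lowerCentralSeries (i + (j + 1) + 1) := by
          convert ih (i + 1) using 2
          omega
    · calc ⁅⁅N.lowerCentralSeries i, H.lowerCentralSeries j⁆, H⁆
          = ⁅H, ⁅H.lowerCentralSeries j, N.lowerCentralSeries i⁆⁆ := by
            rw [commutator_comm, commutator_comm (N.lowerCentralSeries i)]
        _ ≤ ⁅H, N.lowerCentralSeries (i + j + 1)⁆ := commutator_mono le_rfl (ih i)
        _ ≤ N.lowerCentralSeries (i + (j + 1) + 1) := commutator_lowerCentralSeries_le_succ hHN _

theorem normal_lowerCentralSeries_sup (hHN : ⁅H, N⁆ ≤ N.lowerCentralSeries 1)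
    (hsup : N ⊔ H = ⊤) (k : ℕ) :
    (N.lowerCentralSeries k ⊔ H.lowerCentralSeries k).Normal := by
  rw [← normalizer_eq_top_iff, eq_top_iff, ← hsup, sup_le_iff]
  constructor
  · rw [le_normalizer_iff_commutator_le_right]
    refine le_trans ?_ le_sup_left
    rw [commutator_sup_right_le_iff]
    refine ⟨commutator_le_right _ _, ?_⟩
    rw [commutator_comm]
    exact (commutator_lowerCentralSeries_lowerCentralSeries_le hHN 0 k).trans
      (lowerCentralSeries_antitone _ (by omega))
  · refine le_trans ?_ (normalizer_inf_normalizer_le_normalizer_sup _ _)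
    rw [normalizer_eq_top, top_inf_eq]
    exact self_le_normalizer_lowerCentralSeries H k

theorem top_lowerCentralSeries_eq_sup (hHN : ⁅H, N⁆ ≤ N.lowerCentralSeries 1)
    (hsup : N ⊔ H = ⊤) (k : ℕ) :
    (⊤ : Subgroup G).lowerCentralSeries k = N.lowerCentralSeries k ⊔ H.lowerCentralSeries k := by
  refine le_antisymm ?_
    (sup_le (lowerCentralSeries_mono k le_top) (lowerCentralSeries_mono k le_top))
  induction k with
  | zero => exact hsup.ge
  | succ k ih =>
    have := normal_lowerCentralSeries_sup hHN hsup (k + 1)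
    rw [lowerCentralSeries_succ]
    refine (commutator_mono ih hsup.ge).trans ?_
    simp only [commutator_sup_left_le_iff, commutator_sup_right_le_iff]
    refine ⟨⟨le_sup_left, ?_⟩, ?_, le_sup_right⟩
    · refine le_trans ?_ le_sup_left
      simpa using commutator_lowerCentralSeries_lowerCentralSeries_le hHN 0 k
    · rw [commutator_comm]
      exact (commutator_lowerCentralSeries_le_succ hHN k).trans le_sup_left

theorem top_lowerCentralSeries_inf_eq (hHN : ⁅H, N⁆ ≤ N.lowerCentralSeries 1)
    (hsup : N ⊔ H = ⊤) (hinf : N ⊓ H = ⊥) (k : ℕ) :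
    (⊤ : Subgroup G).lowerCentralSeries k ⊓ N = N.lowerCentralSeries k := by
  refine le_antisymm ?_ (le_inf (lowerCentralSeries_mono k le_top) (lowerCentralSeries_le_self N k))
  intro x hx
  obtain ⟨hx, hxN⟩ := mem_inf.mp hx
  rw [top_lowerCentralSeries_eq_sup hHN hsup, mem_sup_of_normal_left] at hx
  obtain ⟨y, hy, z, hz, rfl⟩ := hx
  have hzN : z ∈ N := by simpa using mul_mem (inv_mem (lowerCentralSeries_le_self N k hy)) hxN
  have hz1 : z = 1 := mem_bot.mp (hinf ▸ mem_inf.mpr ⟨hzN, lowerCentralSeries_le_self H k hz⟩)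
  simpa [hz1] using hy

end AlmostDirect

end Subgroup

namespace SemidirectProduct

open Subgroup
open scoped commutatorElement

variable {A C : Type*} [Group A] [Group C] {φ : C →* MulAut A}

theorem range_inl_sup_range_inr :
    (inl : A →* A ⋊[φ] C).range ⊔ (inr : C →* A ⋊[φ] C).range = ⊤ :=
  eq_top_iff.mpr fun x _ =>
    inl_left_mul_inr_right x ▸ mul_mem_sup ⟨x.left, rfl⟩ ⟨x.right, rfl⟩

theorem range_inl_inf_range_inr :
    (inl : A →* A ⋊[φ] C).range ⊓ (inr : C →* A ⋊[φ] C).range = ⊥ := by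
  rw [eq_bot_iff]
  intro x hx
  obtain ⟨⟨a, rfl⟩, c, hc⟩ := mem_inf.mp hx
  have hc1 : c = 1 := by simpa using congrArg right hc
  rw [← hc, hc1, map_one]
  exact one_mem _

theorem commutatorElement_inr_inl (c : C) (a : A) :
    ⁅(inr c : A ⋊[φ] C), (inl a : A ⋊[φ] C)⁆ = inl (φ c a * a⁻¹) := by
  rw [commutatorElement_def, map_mul, inl_aut, map_inv, map_inv]

theorem commutator_range_inr_range_inl_le
    (h : ∀ (c : C) (a : A), Abelianization.of (φ c a) = Abelianization.of a) :
    ⁅(inr : C →* A ⋊[φ] C).range, (inl : A →* A ⋊[φ] C).range⁆ ≤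
      (inl : A →* A ⋊[φ] C).range.lowerCentralSeries 1 := by
  rw [commutator_le]
  rintro _ ⟨c, rfl⟩ _ ⟨a, rfl⟩
  rw [commutatorElement_inr_inl, MonoidHom.range_eq_map, ← map_lowerCentralSeries,
    top_lowerCentralSeries_one]
  refine mem_map_of_mem _ ?_
  rw [← Abelianization.ker_of, MonoidHom.mem_ker, map_mul, map_inv, h, mul_inv_cancel]

end SemidirectProduct

universe u

/-- For an almost-direct product `G = A ⋊ C` (the action of `C` on the abelianization of `A`
is trivial), `Γₘ(G) = Γₘ(A) ⋊ Γₘ(C)`: `Γₘ(G)` is generated by `Γₘ(A)` and `Γₘ(C)`, and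
`Γₘ(G) ∩ A = Γₘ(A)`. -/
theorem stmt3 (A C : Type u) [Group A] [Group C] (φ : C →* MulAut A)
    (h : ∀ (c : C) (a : A), Abelianization.of (φ c a) = Abelianization.of a) (m : ℕ) :
    (⊤ : Subgroup (A ⋊[φ] C)).lowerCentralSeries m =
      ((⊤ : Subgroup A).lowerCentralSeries m).map (SemidirectProduct.inl : A →* A ⋊[φ] C) ⊔
        ((⊤ : Subgroup C).lowerCentralSeries m).map (SemidirectProduct.inr : C →* A ⋊[φ] C) ∧
    (⊤ : Subgroup (A ⋊[φ] C)).lowerCentralSeries m ⊓ (SemidirectProduct.inl : A →* A ⋊[φ] C).range =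
      ((⊤ : Subgroup A).lowerCentralSeries m).map (SemidirectProduct.inl : A →* A ⋊[φ] C) := by
  have : (SemidirectProduct.inl : A →* A ⋊[φ] C).range.Normal := by
    rw [SemidirectProduct.range_inl_eq_ker_rightHom]; infer_instance
  have hHN := SemidirectProduct.commutator_range_inr_range_inl_le h
  have hsup := SemidirectProduct.range_inl_sup_range_inr (φ := φ)
  simp only [Subgroup.map_lowerCentralSeries, ← MonoidHom.range_eq_map]
  exact ⟨Subgroup.top_lowerCentralSeries_eq_sup hHN hsup m,
    Subgroup.top_lowerCentralSeries_inf_eq hHN hsup SemidirectProduct.range_inl_inf_range_inr m⟩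
end

section
/- Every free group is residually torsion-free nilpotent. -/
/-!
Write a nontrivial element as a reduced syllable word `a₀ ^ e₀ ⋯ aₘ₋₁ ^ eₘ₋₁`: consecutive
letters differ and all exponents are nonzero (the normal form of `freeGroupEquivCoprodI`).
Send a generator `a` to `1 + N_a`, where `N_a` is the `(m + 1) × (m + 1)` integer matrix with a
`1` at `(i, i + 1)` whenever `aᵢ = a`. Consecutive letters differ, so `N_a ^ 2 = 0` and `a ^ e`
goes to `1 + e • N_a`; the product of these lower Hessenberg matrices has `e₀ ⋯ eₘ₋₁ ≠ 0` in its
corner `(0, m)`. Integer unitriangular matrices form a nilpotent group, because commutators push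
`u - 1` one superdiagonal further up, and a torsion-free one: if `u - 1` vanishes below the
`d`-th superdiagonal then `u ^ k - 1 ≡ k • (u - 1)` modulo the next one, so `u ^ k = 1` pushes
`u - 1` up as well.
-/

universe u

/-- The pre-2025 Mathlib notion: a monoid is torsion-free if no nontrivial element has finite order. -/
def Monoid.IsTorsionFree (G : Type*) [Monoid G] : Prop :=
  ∀ g : G, g ≠ 1 → ¬IsOfFinOrder g

theorem Monoid.IsTorsionFree.of_injective {G H : Type*} [Monoid G] [Monoid H] {f : G →* H}
    (hf : Function.Injective f) (hH : Monoid.IsTorsionFree H) : Monoid.IsTorsionFree G :=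
  fun g hg hfin => hH (f g) ((map_ne_one_iff f hf).mpr hg) (f.isOfFinOrder hfin)

open commutatorElement

theorem Units.val_commutatorElement_sub_one {M : Type*} [Ring M] (u v : Mˣ) :
    ((⁅u, v⁆ : Mˣ) : M) - 1 = ((u - 1) * (v - 1) - (v - 1) * (u - 1)) * (↑u⁻¹ * ↑v⁻¹) := by
  have h : (v : M) * (u * ↑u⁻¹) * ↑v⁻¹ = 1 := by simp
  rw [commutatorElement_def, Units.val_mul, Units.val_mul, Units.val_mul]
  conv_lhs => rw [← h]
  noncomm_ring

theorem Units.val_zpow_eq_one_add_zsmul {M : Type*} [Ring M] {N : M} (hN : N * N = 0) {u : Mˣ}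
    (hu : (u : M) = 1 + N) (k : ℤ) : ((u ^ k : Mˣ) : M) = 1 + k • N := by
  have hu' : ((u⁻¹ : Mˣ) : M) = 1 - N :=
    Units.inv_eq_of_mul_eq_one_right (by simp [hu, mul_sub, add_mul, hN])
  induction k using Int.induction_on with
  | zero => simp
  | succ k ih =>
    rw [zpow_add_one, Units.val_mul, ih, hu]
    simp [mul_add, add_mul, mul_assoc, hN, add_smul]
    abel
  | pred k ih =>
    rw [zpow_sub_one, Units.val_mul, ih, hu']
    simp [mul_sub, add_mul, mul_assoc, hN, sub_smul]
    abel

namespace Matrix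

def superdiagonalsFrom (R : Type*) [AddGroup R] (n d : ℕ) :
    AddSubgroup (Matrix (Fin n) (Fin n) R) where
  carrier := {A | ∀ i j : Fin n, (j : ℕ) < i + d → A i j = 0}
  zero_mem' _ _ _ := rfl
  add_mem' hA hB i j hij := by rw [add_apply, hA i j hij, hB i j hij, add_zero]
  neg_mem' hA i j hij := by rw [neg_apply, hA i j hij, neg_zero]

section AddGroup

variable {R : Type*} [AddGroup R] {n d e : ℕ} {A : Matrix (Fin n) (Fin n) R}

theorem superdiagonalsFrom_anti (hde : d ≤ e) :
    superdiagonalsFrom R n e ≤ superdiagonalsFrom R n d :=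
  fun _ hA i j hij => hA i j (by omega)

theorem superdiagonalsFrom_self : superdiagonalsFrom R n n = ⊥ :=
  eq_bot_iff.mpr fun A hA => by ext i j; exact hA i j (by omega)

theorem nsmul_mem_superdiagonalsFrom_iff [IsAddTorsionFree R] {k : ℕ} (hk : k ≠ 0) :
    k • A ∈ superdiagonalsFrom R n d ↔ A ∈ superdiagonalsFrom R n d := by
  refine ⟨fun h i j hij => nsmul_right_injective hk ?_, fun h => AddSubgroup.nsmul_mem _ h k⟩
  simpa using h i j hij

end AddGroup

section Ring

variable {R : Type*} [Ring R] {n d e : ℕ} {A B : Matrix (Fin n) (Fin n) R}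

theorem mul_mem_superdiagonalsFrom (hA : A ∈ superdiagonalsFrom R n d)
    (hB : B ∈ superdiagonalsFrom R n e) : A * B ∈ superdiagonalsFrom R n (d + e) := by
  intro i j hij
  rw [mul_apply]
  refine Finset.sum_eq_zero fun k _ => ?_
  by_cases hk : (k : ℕ) < i + d
  · rw [hA i k hk, zero_mul]
  · rw [hB k j (by omega), mul_zero]

theorem one_mem_superdiagonalsFrom_zero :
    (1 : Matrix (Fin n) (Fin n) R) ∈ superdiagonalsFrom R n 0 :=
  fun _ _ hij => one_apply_ne (Fin.ne_of_val_ne (by omega))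

theorem mem_superdiagonalsFrom_zero_of_sub_one_mem (hA : A - 1 ∈ superdiagonalsFrom R n d) :
    A ∈ superdiagonalsFrom R n 0 := by
  simpa using add_mem (superdiagonalsFrom_anti (Nat.zero_le d) hA) one_mem_superdiagonalsFrom_zero

theorem mul_sub_one_mem_superdiagonalsFrom (hA : A - 1 ∈ superdiagonalsFrom R n d)
    (hB : B - 1 ∈ superdiagonalsFrom R n d) : A * B - 1 ∈ superdiagonalsFrom R n d := by
  have h : A * B - 1 = (A - 1) * (B - 1) + (A - 1) + (B - 1) := by noncomm_ring
  rw [h]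
  exact add_mem (add_mem (superdiagonalsFrom_anti (by omega) (mul_mem_superdiagonalsFrom hA hB))
    hA) hB

theorem one_add_pow_sub_sub_mem (hd : 1 ≤ d) (hA : A ∈ superdiagonalsFrom R n d) (k : ℕ) :
    (1 + A) ^ k - 1 - k • A ∈ superdiagonalsFrom R n (d + 1) := by
  induction k with
  | zero => simp
  | succ k ih =>
    have h : (1 + A) ^ (k + 1) - 1 - (k + 1) • A
        = ((1 + A) ^ k - 1 - k • A) * (1 + A) + k • (A * A) := by
      simp only [pow_succ, nsmul_eq_mul, Nat.cast_add, Nat.cast_one]; noncomm_ring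
    rw [h]
    refine add_mem ?_ (nsmul_mem ?_ k)
    · simpa using mul_mem_superdiagonalsFrom ih
        (add_mem one_mem_superdiagonalsFrom_zero (superdiagonalsFrom_anti (Nat.zero_le d) hA))
    · exact superdiagonalsFrom_anti (by omega) (mul_mem_superdiagonalsFrom hA hA)

theorem eq_one_of_pow_eq_one [IsAddTorsionFree R] (hA : A - 1 ∈ superdiagonalsFrom R n 1)
    {k : ℕ} (hk : k ≠ 0) (hAk : A ^ k = 1) : A = 1 := by
  suffices h : ∀ d, A - 1 ∈ superdiagonalsFrom R n (d + 1) by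
    rw [← sub_eq_zero, ← AddSubgroup.mem_bot, ← superdiagonalsFrom_self (R := R)]
    exact superdiagonalsFrom_anti (by omega) (h n)
  intro d
  induction d with
  | zero => exact hA
  | succ d ih =>
    have h := one_add_pow_sub_sub_mem (by omega) ih k
    rwa [add_sub_cancel, hAk, sub_self, zero_sub, neg_mem_iff,
      nsmul_mem_superdiagonalsFrom_iff hk] at h

variable (R) in
/-- For `d = 1` this is the upper unitriangular group. The condition on `u⁻¹`, which for `d ≥ 1`
follows from the one on `u`, makes closure under inverses immediate. -/
def unitriangular (n d : ℕ) : Subgroup (Matrix (Fin n) (Fin n) R)ˣ where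
  carrier := {u | (u : Matrix (Fin n) (Fin n) R) - 1 ∈ superdiagonalsFrom R n d ∧
    ((u⁻¹ : (Matrix (Fin n) (Fin n) R)ˣ) : Matrix (Fin n) (Fin n) R) - 1 ∈ superdiagonalsFrom R n d}
  one_mem' := by simp
  mul_mem' := fun ⟨hu, hu'⟩ ⟨hv, hv'⟩ =>
    ⟨by simpa using mul_sub_one_mem_superdiagonalsFrom hu hv,
      by simpa using mul_sub_one_mem_superdiagonalsFrom hv' hu'⟩
  inv_mem' := fun ⟨h, h'⟩ => ⟨h', by rwa [inv_inv]⟩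

theorem unitriangular_anti (hde : d ≤ e) : unitriangular R n e ≤ unitriangular R n d :=
  fun _ ⟨h, h'⟩ => ⟨superdiagonalsFrom_anti hde h, superdiagonalsFrom_anti hde h'⟩

theorem unitriangular_self : unitriangular R n n = ⊥ := by
  refine eq_bot_iff.mpr fun u ⟨hu, _⟩ => Units.ext ?_
  rwa [superdiagonalsFrom_self, AddSubgroup.mem_bot, sub_eq_zero] at hu

theorem val_commutatorElement_sub_one_mem {u v : (Matrix (Fin n) (Fin n) R)ˣ}
    (hu : u ∈ unitriangular R n d) (hv : v ∈ unitriangular R n e) :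
    ((⁅u, v⁆ : (Matrix (Fin n) (Fin n) R)ˣ) : Matrix (Fin n) (Fin n) R) - 1 ∈
      superdiagonalsFrom R n (d + e) := by
  rw [Units.val_commutatorElement_sub_one, ← add_zero (d + e)]
  refine mul_mem_superdiagonalsFrom (sub_mem (mul_mem_superdiagonalsFrom hu.1 hv.1) ?_)
    (mul_mem_superdiagonalsFrom (mem_superdiagonalsFrom_zero_of_sub_one_mem hu.2)
      (mem_superdiagonalsFrom_zero_of_sub_one_mem hv.2))
  rw [add_comm]
  exact mul_mem_superdiagonalsFrom hv.1 hu.1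

theorem commutatorElement_mem_unitriangular {u v : (Matrix (Fin n) (Fin n) R)ˣ}
    (hu : u ∈ unitriangular R n d) (hv : v ∈ unitriangular R n e) :
    ⁅u, v⁆ ∈ unitriangular R n (d + e) :=
  ⟨val_commutatorElement_sub_one_mem hu hv, by
    rw [commutatorElement_inv, add_comm]; exact val_commutatorElement_sub_one_mem hv hu⟩

instance isNilpotent_unitriangular : Group.IsNilpotent (unitriangular R n 1) := by
  rw [Subgroup.nilpotent_iff_finite_descending_central_series]
  refine ⟨n, fun c => (unitriangular R n (c + 1)).subgroupOf (unitriangular R n 1),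
    ⟨Subgroup.subgroupOf_self _, fun x c hx g => ?_⟩, ?_⟩
  · rw [Subgroup.mem_subgroupOf] at *
    exact commutatorElement_mem_unitriangular hx g.2
  · refine eq_bot_iff.mpr fun x hx => ?_
    have hx1 : (x : (Matrix (Fin n) (Fin n) R)ˣ) ∈ unitriangular R n n :=
      unitriangular_anti (by omega) (Subgroup.mem_subgroupOf.mp hx)
    rw [unitriangular_self, Subgroup.mem_bot] at hx1
    exact Subgroup.mem_bot.mpr (Subtype.ext hx1)

theorem isTorsionFree_unitriangular [IsAddTorsionFree R] :
    Monoid.IsTorsionFree (unitriangular R n 1) := by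
  intro u hu hfin
  obtain ⟨k, hk, huk⟩ := isOfFinOrder_iff_pow_eq_one.mp hfin
  refine hu (Subtype.ext (Units.ext (eq_one_of_pow_eq_one u.2.1 hk.ne' ?_)))
  rw [← Units.val_pow_eq_pow_val, ← Subgroup.coe_pow, huk]
  rfl

end Ring

section Hessenberg

variable {R : Type*} [Semiring R] {m : ℕ}

def IsLowerHessenberg (A : Matrix (Fin m) (Fin m) R) : Prop :=
  ∀ i j : Fin m, (i : ℕ) + 1 < j → A i j = 0

theorem list_prod_apply_eq_zero_of_isLowerHessenberg {L : List (Matrix (Fin m) (Fin m) R)}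
    (hL : ∀ A ∈ L, A.IsLowerHessenberg) {i j : Fin m} (hij : (i : ℕ) + L.length < j) :
    L.prod i j = 0 := by
  induction L generalizing i with
  | nil => exact one_apply_ne (Fin.ne_of_val_ne (by simp at hij; omega))
  | cons A L ih =>
    rw [List.prod_cons, mul_apply]
    refine Finset.sum_eq_zero fun k _ => ?_
    by_cases hk : (i : ℕ) + 1 < k
    · rw [hL A List.mem_cons_self i k hk, zero_mul]
    · rw [ih (fun B hB => hL B (List.mem_cons_of_mem A hB)) (by simp at hij; omega), mul_zero]

theorem list_prod_cons_apply_of_isLowerHessenberg {A : Matrix (Fin m) (Fin m) R}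
    {L : List (Matrix (Fin m) (Fin m) R)} (hL : ∀ B ∈ A :: L, B.IsLowerHessenberg)
    {i k j : Fin m} (hk : (k : ℕ) = i + 1) (hj : (j : ℕ) = k + L.length) :
    (A :: L).prod i j = A i k * L.prod k j := by
  rw [List.prod_cons, mul_apply]
  refine Finset.sum_eq_single k (fun l _ hlk => ?_) (by simp)
  have hlk : (l : ℕ) ≠ k := Fin.val_ne_of_ne hlk
  by_cases hl : (i : ℕ) + 1 < l
  · rw [hL A List.mem_cons_self i l hl, zero_mul]
  · rw [list_prod_apply_eq_zero_of_isLowerHessenberg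
      (fun B hB => hL B (List.mem_cons_of_mem A hB)) (by omega), mul_zero]

end Hessenberg

end Matrix

namespace FreeGroup

variable {α : Type*}

theorem exists_syllables (x : FreeGroup α) :
    ∃ S : List (α × ℤ), (S.map Prod.fst).IsChain (· ≠ ·) ∧ (∀ p ∈ S, p.2 ≠ 0) ∧
      (S.map fun p => of p.1 ^ p.2).prod = x := by
  classical
  set w := Monoid.CoprodI.Word.equiv (freeGroupEquivCoprodI x)
  have hg (g : FreeGroup Unit) : of () ^ freeGroupUnitEquivInt g = g :=
    freeGroupUnitEquivInt.symm_apply_apply g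
  refine ⟨w.toList.map fun l => (l.1, freeGroupUnitEquivInt l.2), ?_, ?_, ?_⟩
  · simpa [List.map_map, List.isChain_map] using w.chain_ne
  · simp only [List.mem_map]
    rintro _ ⟨l, hl, rfl⟩ h0
    exact w.ne_one l hl (by rw [← hg l.2, show freeGroupUnitEquivInt l.2 = 0 from h0, zpow_zero])
  · have hx : freeGroupEquivCoprodI.symm w.prod = x :=
      (freeGroupEquivCoprodI.symm_apply_eq).mpr (Monoid.CoprodI.Word.equiv.symm_apply_apply _)
    rw [← hx, Monoid.CoprodI.Word.prod, map_list_prod, List.map_map, List.map_map]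
    refine congrArg List.prod (List.map_congr_left fun ⟨i, g⟩ _ => ?_)
    conv_rhs => rw [Function.comp_apply, ← hg g]
    simp

section Magnus

variable [DecidableEq α]

def magnusMatrix (w : List α) (a : α) : Matrix (Fin (w.length + 1)) (Fin (w.length + 1)) ℤ :=
  Matrix.of fun i j => if (j : ℕ) = i + 1 ∧ w[(i : ℕ)]? = some a then 1 else 0

theorem magnusMatrix_apply_of_ne {w : List α} {a : α} {i j : Fin (w.length + 1)}
    (hij : (j : ℕ) ≠ i + 1) : magnusMatrix w a i j = 0 :=
  if_neg fun h => hij h.1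

theorem magnusMatrix_mem (w : List α) (a : α) :
    magnusMatrix w a ∈ Matrix.superdiagonalsFrom ℤ (w.length + 1) 1 :=
  fun _ _ hij => magnusMatrix_apply_of_ne (by omega)

theorem magnusMatrix_mul_self {w : List α} (hw : w.IsChain (· ≠ ·)) (a : α) :
    magnusMatrix w a * magnusMatrix w a = 0 := by
  ext i k
  rw [Matrix.mul_apply, Matrix.zero_apply]
  refine Finset.sum_eq_zero fun j _ => ?_
  by_cases hij : (j : ℕ) = i + 1
  · by_cases hjk : (k : ℕ) = j + 1
    · have hne : ¬(w[(i : ℕ)]? = some a ∧ w[(j : ℕ)]? = some a) := by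
        rintro ⟨hi, hj⟩
        rw [hij] at hj
        obtain ⟨hj', rfl⟩ := List.getElem?_eq_some_iff.mp hj
        obtain ⟨_, hi⟩ := List.getElem?_eq_some_iff.mp hi
        exact List.isChain_iff_getElem.mp hw i hj' hi
      simp only [magnusMatrix, Matrix.of_apply, hij, hjk, true_and]
      split_ifs <;> simp_all
    · rw [magnusMatrix_apply_of_ne hjk, mul_zero]
  · rw [magnusMatrix_apply_of_ne hij, zero_mul]

noncomputable def magnusUnit {w : List α} (hw : w.IsChain (· ≠ ·)) (a : α) :
    (Matrix (Fin (w.length + 1)) (Fin (w.length + 1)) ℤ)ˣ :=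
  (IsNilpotent.isUnit_one_add ⟨2, by rw [sq, magnusMatrix_mul_self hw a]⟩).unit

theorem val_magnusUnit {w : List α} (hw : w.IsChain (· ≠ ·)) (a : α) :
    (magnusUnit hw a : Matrix (Fin (w.length + 1)) (Fin (w.length + 1)) ℤ) =
      1 + magnusMatrix w a :=
  IsUnit.unit_spec _

theorem val_magnusUnit_zpow {w : List α} (hw : w.IsChain (· ≠ ·)) (a : α) (k : ℤ) :
    ((magnusUnit hw a ^ k : (Matrix (Fin (w.length + 1)) (Fin (w.length + 1)) ℤ)ˣ) :
      Matrix (Fin (w.length + 1)) (Fin (w.length + 1)) ℤ) = 1 + k • magnusMatrix w a :=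
  Units.val_zpow_eq_one_add_zsmul (magnusMatrix_mul_self hw a) (val_magnusUnit hw a) k

theorem magnusUnit_mem_unitriangular {w : List α} (hw : w.IsChain (· ≠ ·)) (a : α) :
    magnusUnit hw a ∈ Matrix.unitriangular ℤ (w.length + 1) 1 := by
  refine ⟨?_, ?_⟩
  · rw [val_magnusUnit, add_sub_cancel_left]
    exact magnusMatrix_mem w a
  · rw [← zpow_neg_one, val_magnusUnit_zpow, add_sub_cancel_left]
    exact zsmul_mem (magnusMatrix_mem w a) _

noncomputable def magnusHom {w : List α} (hw : w.IsChain (· ≠ ·)) :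
    FreeGroup α →* Matrix.unitriangular ℤ (w.length + 1) 1 :=
  FreeGroup.lift fun a => ⟨magnusUnit hw a, magnusUnit_mem_unitriangular hw a⟩

theorem val_magnusHom_of_zpow {w : List α} (hw : w.IsChain (· ≠ ·)) (a : α) (k : ℤ) :
    ((magnusHom hw (of a ^ k) : (Matrix (Fin (w.length + 1)) (Fin (w.length + 1)) ℤ)ˣ) :
      Matrix (Fin (w.length + 1)) (Fin (w.length + 1)) ℤ) = 1 + k • magnusMatrix w a := by
  rw [map_zpow, magnusHom, lift_apply_of, Subgroup.coe_zpow]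
  exact val_magnusUnit_zpow hw a k

theorem isLowerHessenberg_one_add_zsmul_magnusMatrix (w : List α) (a : α) (k : ℤ) :
    (1 + k • magnusMatrix w a).IsLowerHessenberg := fun i j hij => by
  rw [Matrix.add_apply, Matrix.smul_apply, magnusMatrix_apply_of_ne (by omega),
    Matrix.one_apply_ne (Fin.ne_of_val_ne (by omega)), smul_zero, add_zero]

theorem list_prod_one_add_zsmul_magnusMatrix_apply_last {S T S' : List (α × ℤ)}
    (hS : T ++ S' = S) {i : Fin ((S.map Prod.fst).length + 1)} (hi : (i : ℕ) = T.length) :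
    (S'.map fun p => 1 + p.2 • magnusMatrix (S.map Prod.fst) p.1).prod i (Fin.last _) =
      (S'.map Prod.snd).prod := by
  induction S' generalizing T i with
  | nil =>
    have : i = Fin.last _ := Fin.ext (by simp [hi, ← hS])
    simp [this]
  | cons p S' ih =>
    have hlen : (S.map Prod.fst).length = T.length + 1 + S'.length := by
      simp [← hS]; omega
    let k : Fin ((S.map Prod.fst).length + 1) := ⟨T.length + 1, by omega⟩
    have hH : ∀ B ∈ (p :: S').map fun p => 1 + p.2 • magnusMatrix (S.map Prod.fst) p.1,
        B.IsLowerHessenberg := by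
      simp only [List.mem_map]
      rintro _ ⟨q, -, rfl⟩
      exact isLowerHessenberg_one_add_zsmul_magnusMatrix _ _ _
    rw [List.map_cons] at hH ⊢
    rw [Matrix.list_prod_cons_apply_of_isLowerHessenberg (k := k) hH (by simp [k, hi])
      (by simp [k, hlen]), ih (T := T ++ [p]) (by simp [hS]) (by simp [k]), List.map_cons,
      List.prod_cons]
    congr 1
    have hletter : (S.map Prod.fst)[(i : ℕ)]? = some p.1 := by simp [hi, ← hS]
    rw [Matrix.add_apply, Matrix.one_apply_ne (Fin.ne_of_val_ne (by simp [k, hi])),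
      Matrix.smul_apply, magnusMatrix, Matrix.of_apply, if_pos ⟨by simp [k, hi], hletter⟩,
      smul_eq_mul, mul_one, zero_add]

theorem val_magnusHom_prod_apply_zero_last {S : List (α × ℤ)}
    (hS : (S.map Prod.fst).IsChain (· ≠ ·)) :
    ((magnusHom hS (S.map fun p => of p.1 ^ p.2).prod :
      (Matrix (Fin ((S.map Prod.fst).length + 1)) (Fin ((S.map Prod.fst).length + 1)) ℤ)ˣ) :
      Matrix (Fin ((S.map Prod.fst).length + 1)) (Fin ((S.map Prod.fst).length + 1)) ℤ)
      0 (Fin.last _) = (S.map Prod.snd).prod := by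
  rw [← Units.coeHom_apply, ← Subgroup.subtype_apply, ← MonoidHom.comp_apply,
    ← MonoidHom.comp_apply, map_list_prod, List.map_map]
  simp only [Function.comp_def, MonoidHom.comp_apply, Subgroup.subtype_apply, Units.coeHom_apply,
    val_magnusHom_of_zpow]
  exact list_prod_one_add_zsmul_magnusMatrix_apply_last (T := []) rfl rfl

end Magnus

theorem exists_unitriangular_apply_ne_one {x : FreeGroup α} (hx : x ≠ 1) :
    ∃ n, ∃ φ : FreeGroup α →* Matrix.unitriangular ℤ n 1, φ x ≠ 1 := by
  classical
  obtain ⟨S, hchain, hS0, rfl⟩ := exists_syllables x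
  have hS : S ≠ [] := by rintro rfl; exact hx List.prod_nil
  refine ⟨_, magnusHom hchain, fun h => ?_⟩
  have hcorner := val_magnusHom_prod_apply_zero_last hchain
  rw [h, OneMemClass.coe_one, Units.val_one, Matrix.one_apply_ne] at hcorner
  · refine List.prod_ne_zero (fun h0 => ?_) hcorner.symm
    obtain ⟨p, hp, hp0⟩ := List.mem_map.mp h0
    exact hS0 p hp hp0
  · exact Fin.ne_of_val_ne (by simpa [eq_comm] using hS)

end FreeGroup

/-- Every free group is residually torsion-free nilpotent. -/
theorem stmt6 (α : Type u) :
    ∀ x : FreeGroup α, x ≠ 1 → ∃ (H : Type u) (_ : Group H) (φ : FreeGroup α →* H),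
      Group.IsNilpotent H ∧ Monoid.IsTorsionFree H ∧ φ x ≠ 1 := by
  intro x hx
  obtain ⟨n, φ, hφ⟩ := FreeGroup.exists_unitriangular_apply_ne_one hx
  let e : Matrix.unitriangular ℤ n 1 ≃* ULift.{u} (Matrix.unitriangular ℤ n 1) :=
    MulEquiv.ulift.symm
  refine ⟨_, inferInstance, e.toMonoidHom.comp φ, Group.nilpotent_of_mulEquiv e,
    Monoid.IsTorsionFree.of_injective (f := e.symm.toMonoidHom) e.symm.injective
      Matrix.isTorsionFree_unitriangular, ?_⟩
  simpa using hφ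
end

section
/- Let 1 → H → G → P → 1 be a short exact sequence of groups where P is a finite group and H is residually finite. Then G is residually finite. -/
/-!
An element outside a finite-index subgroup `H` is separated by `H` itself; an element of `H` lies
outside some finite-index subgroup `K` of `H`, and `K` still has finite index in `G` because
indices multiply along `K ≤ H ≤ G`.
-/

universe u

namespace Group

variable {G : Type u} [Group G]

theorem residuallyFinite_iff_forall_exists_finite_monoidHom :
    ResiduallyFinite G ↔
      ∀ g : G, g ≠ 1 → ∃ (Q : Type u) (_ : Group Q) (_ : Finite Q) (f : G →* Q), f g ≠ 1 := by
  refine ⟨fun _ g hg ↦ ?_, residuallyFinite_of_forall_exists_finite_monoidHom⟩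
  obtain ⟨N, hgN⟩ := exists_finiteIndexNormalSubgroup_notMem g hg
  exact ⟨G ⧸ N.toSubgroup, inferInstance, inferInstance, QuotientGroup.mk' _,
    by rwa [Ne, QuotientGroup.mk'_apply, QuotientGroup.eq_one_iff]⟩

theorem residuallyFinite_of_finiteIndex (H : Subgroup G) [H.FiniteIndex] [ResiduallyFinite H] :
    ResiduallyFinite G := by
  rw [residuallyFinite_iff_exists_finiteIndex]
  intro g hg
  by_cases hgH : g ∈ H
  · obtain ⟨K, hK, hgK⟩ :=
      residuallyFinite_iff_exists_finiteIndex.mp ‹_› (⟨g, hgH⟩ : H)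
        fun h ↦ hg (congrArg Subtype.val h)
    refine ⟨K.map H.subtype, ⟨?_⟩,
      fun hg' ↦ hgK ((Subgroup.mem_map_iff_mem H.subtype_injective).mp hg')⟩
    rw [Subgroup.index_map_subtype]
    exact mul_ne_zero hK.index_ne_zero Subgroup.FiniteIndex.index_ne_zero
  · exact ⟨H, ‹_›, hgH⟩

end Group

theorem stmt7_general (G : Type u) [Group G] (H : Subgroup G) [Finite (G ⧸ H)]
    (hH : ∀ x : H, x ≠ 1 → ∃ (Q : Type u) (_ : Group Q) (_ : Finite Q) (φ : H →* Q),
      φ x ≠ 1) :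
    ∀ x : G, x ≠ 1 → ∃ (Q : Type u) (_ : Group Q) (_ : Finite Q) (φ : G →* Q),
      φ x ≠ 1 := by
  have := Subgroup.finiteIndex_of_finite_quotient (H := H)
  have := Group.residuallyFinite_iff_forall_exists_finite_monoidHom.mpr hH
  exact Group.residuallyFinite_iff_forall_exists_finite_monoidHom.mp
    (Group.residuallyFinite_of_finiteIndex H)

/-- If `H ◁ G` with finite quotient and `H` is residually finite, then `G` is
residually finite. -/
theorem stmt7 (G : Type u) [Group G] (H : Subgroup G) [H.Normal] [Finite (G ⧸ H)]
    (hH : ∀ x : H, x ≠ 1 → ∃ (Q : Type u) (_ : Group Q) (_ : Finite Q) (φ : H →* Q),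
      φ x ≠ 1) :
    ∀ x : G, x ≠ 1 → ∃ (Q : Type u) (_ : Group Q) (_ : Finite Q) (φ : G →* Q),
      φ x ≠ 1 :=
  stmt7_general G H hH
end

section
/- Let p be a prime, let 1 → H → G → P → 1 be a short exact sequence of groups where P is a finite p-group and H is residually p-finite. Then G is residually p-finite. -/
/-!
If `x ∉ H`, the quotient `G ⧸ H` already separates `x`. If `x ∈ H`, pick `φ : H →* Q` to a
finite `p`-group with `φ x ≠ 1` and let `K` be the normal core in `G` of `ker φ ≤ H ≤ G`. It has
finite index, and `G ⧸ K` is a `p`-group: for uniform exponents with `g ^ p ^ a ∈ H` and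
`h ^ p ^ n ∈ ker φ`, every conjugate of `g ^ p ^ (a + n)` is the `p ^ n`-th power of an element
of `H`, so `g ^ p ^ (a + n) ∈ K`.
-/

universe u

section

variable {G : Type*} [Group G] {p : ℕ}

lemma IsPGroup.exists_forall_pow_prime_pow_eq_one [Fact p.Prime] [Finite G]
    (hG : IsPGroup p G) : ∃ n, ∀ g : G, g ^ p ^ n = 1 := by
  obtain ⟨n, hn⟩ := IsPGroup.iff_card.mp hG
  exact ⟨n, fun g => hn ▸ pow_card_eq_one'⟩

lemma exists_forall_pow_prime_pow_mem_of_isPGroup_quotient [Fact p.Prime] {H : Subgroup G}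
    [H.Normal] [Finite (G ⧸ H)] (hH : IsPGroup p (G ⧸ H)) : ∃ n, ∀ g : G, g ^ p ^ n ∈ H := by
  obtain ⟨n, hn⟩ := hH.exists_forall_pow_prime_pow_eq_one
  exact ⟨n, fun g => (QuotientGroup.eq_one_iff _).mp (hn g)⟩

lemma isPGroup_quotient_normalCore_of_forall_pow_mem {N : Subgroup G} {n : ℕ}
    (hN : ∀ g : G, g ^ p ^ n ∈ N) : IsPGroup p (G ⧸ N.normalCore) := by
  intro g
  obtain ⟨g, rfl⟩ := QuotientGroup.mk_surjective g
  refine ⟨n, (QuotientGroup.eq_one_iff _).mpr fun b => ?_⟩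
  simpa only [conj_pow] using hN (b * g * b⁻¹)

end

lemma exists_isPGroup_hom_ne_one_of_notMem {p : ℕ} {G : Type u} [Group G] (K : Subgroup G)
    [K.Normal] [Finite (G ⧸ K)] (hK : IsPGroup p (G ⧸ K)) {x : G} (hx : x ∉ K) :
    ∃ (Q : Type u) (_ : Group Q) (_ : Finite Q) (φ : G →* Q), IsPGroup p Q ∧ φ x ≠ 1 :=
  ⟨G ⧸ K, inferInstance, inferInstance, QuotientGroup.mk' K, hK,
    fun h => hx ((QuotientGroup.eq_one_iff x).mp h)⟩

lemma exists_isPGroup_hom_ne_one_of_subgroup_hom {p : ℕ} [Fact p.Prime] {G : Type u} [Group G]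
    {H : Subgroup G} [H.Normal] [Finite (G ⧸ H)] (hH : IsPGroup p (G ⧸ H))
    {Q : Type*} [Group Q] [Finite Q] (hQ : IsPGroup p Q) (φ : H →* Q) {x : H} (hx : φ x ≠ 1) :
    ∃ (Q : Type u) (_ : Group Q) (_ : Finite Q) (ψ : G →* Q), IsPGroup p Q ∧ ψ x ≠ 1 := by
  set N := φ.ker.map H.subtype
  have : H.FiniteIndex := Subgroup.finiteIndex_of_finite_quotient
  have : N.FiniteIndex := ⟨by
    rw [Subgroup.index_map_subtype]
    exact mul_ne_zero Subgroup.FiniteIndex.index_ne_zero Subgroup.FiniteIndex.index_ne_zero⟩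
  obtain ⟨a, ha⟩ := exists_forall_pow_prime_pow_mem_of_isPGroup_quotient hH
  obtain ⟨n, hn⟩ := hQ.exists_forall_pow_prime_pow_eq_one
  have hpow : ∀ g : G, g ^ p ^ (a + n) ∈ N := fun g =>
    Subgroup.mem_map.mpr ⟨⟨g ^ p ^ a, ha g⟩ ^ p ^ n, by rw [MonoidHom.mem_ker, map_pow, hn],
      by simp [pow_add, pow_mul]⟩
  refine exists_isPGroup_hom_ne_one_of_notMem N.normalCore
    (isPGroup_quotient_normalCore_of_forall_pow_mem hpow) fun hxN => hx ?_
  obtain ⟨y, hy, hyx⟩ := N.normalCore_le hxN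
  rwa [← Subtype.ext hyx]

/-- If `H ◁ G` with finite `p`-group quotient and `H` is residually `p`-finite, then `G` is
residually `p`-finite. -/
theorem stmt8 (p : ℕ) (hp : p.Prime) (G : Type u) [Group G] (H : Subgroup G) [H.Normal]
    [Finite (G ⧸ H)] (hquot : IsPGroup p (G ⧸ H))
    (hH : ∀ x : H, x ≠ 1 → ∃ (Q : Type u) (_ : Group Q) (_ : Finite Q) (φ : H →* Q),
      IsPGroup p Q ∧ φ x ≠ 1) :
    ∀ x : G, x ≠ 1 → ∃ (Q : Type u) (_ : Group Q) (_ : Finite Q) (φ : G →* Q),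
      IsPGroup p Q ∧ φ x ≠ 1 := by
  have : Fact p.Prime := ⟨hp⟩
  intro x hx
  by_cases hxH : x ∈ H
  · obtain ⟨Q, _, _, φ, hQ, hφx⟩ := hH ⟨x, hxH⟩ fun h => hx (congrArg Subtype.val h)
    exact exists_isPGroup_hom_ne_one_of_subgroup_hom hquot hQ φ hφx
  · exact exists_isPGroup_hom_ne_one_of_notMem H hquot hxH
end

section
/- Let 1 → H → G → P → 1 be a short exact sequence of groups where P is solvable and H is residually solvable. Then G is residually solvable. -/
/-!
A homomorphism to a group of derived length `n` kills the `n`-th derived subgroup, so `x` survives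
in some solvable quotient exactly when `x ∉ G⁽ᵏ⁾` for some `k`. If `G⁽ᵐ⁾ ≤ H` (solvability of
`G ⧸ H`), then `G⁽ᵐ⁺ⁿ⁾ ≤ H⁽ⁿ⁾`, so an element of `H` avoiding `H⁽ⁿ⁾` avoids `G⁽ᵐ⁺ⁿ⁾`, and an
element outside `H` already avoids `G⁽ᵐ⁾`.
-/

universe u

open Subgroup QuotientGroup

lemma exists_derivedSeries_le_ker {G Q : Type*} [Group G] [Group Q] [Group.IsSolvable Q]
    (φ : G →* Q) : ∃ n, derivedSeries G n ≤ φ.ker := by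
  obtain ⟨n, hn⟩ := Group.IsSolvable.solvable (G := Q)
  refine ⟨n, (Subgroup.map_eq_bot_iff _).1 (le_bot_iff.1 ?_)⟩
  exact hn ▸ map_derivedSeries_le_derivedSeries φ n

instance isSolvable_quotient_derivedSeries (G : Type*) [Group G] (n : ℕ) :
    Group.IsSolvable (G ⧸ derivedSeries G n) :=
  ⟨n, by rw [← map_derivedSeries_eq (mk'_surjective _), Subgroup.map_eq_bot_iff, ker_mk']⟩

lemma exists_hom_isSolvable_ne_one_iff {G : Type u} [Group G] (x : G) :
    (∃ (Q : Type u) (_ : Group Q) (φ : G →* Q), Group.IsSolvable Q ∧ φ x ≠ 1) ↔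
      ∃ n, x ∉ derivedSeries G n := by
  constructor
  · rintro ⟨Q, _, φ, _, hφx⟩
    obtain ⟨n, hn⟩ := exists_derivedSeries_le_ker φ
    exact ⟨n, fun hx => hφx (hn hx)⟩
  · rintro ⟨n, hx⟩
    exact ⟨G ⧸ derivedSeries G n, inferInstance, mk' _, inferInstance,
      by rwa [mk'_apply, Ne, eq_one_iff]⟩

lemma derivedSeries_add_le_map_derivedSeries {G : Type*} [Group G] {H : Subgroup G} {m : ℕ}
    (hm : derivedSeries G m ≤ H) (n : ℕ) :
    derivedSeries G (m + n) ≤ (derivedSeries H n).map H.subtype := by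
  induction n with
  | zero => simpa [← MonoidHom.range_eq_map] using hm
  | succ n ih =>
    rw [← add_assoc, derivedSeries_succ, derivedSeries_succ, map_commutator]
    exact commutator_mono ih ih

/-- If `H ◁ G` with solvable quotient and `H` is residually solvable, then `G` is
residually solvable. -/
theorem stmt9 (G : Type u) [Group G] (H : Subgroup G) [H.Normal]
    (hquot : IsSolvable (G ⧸ H))
    (hH : ∀ x : H, x ≠ 1 → ∃ (Q : Type u) (_ : Group Q) (φ : H →* Q),
      IsSolvable Q ∧ φ x ≠ 1) :
    ∀ x : G, x ≠ 1 → ∃ (Q : Type u) (_ : Group Q) (φ : G →* Q),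
      IsSolvable Q ∧ φ x ≠ 1 := by
  intro x hx
  -- the deprecated alias `IsSolvable` is not registered as an instance
  have : Group.IsSolvable (G ⧸ H) := hquot
  obtain ⟨m, hm⟩ := exists_derivedSeries_le_ker (mk' H)
  rw [ker_mk'] at hm
  refine (exists_hom_isSolvable_ne_one_iff x).2 ?_
  by_cases hxH : x ∈ H
  · obtain ⟨n, hn⟩ := (exists_hom_isSolvable_ne_one_iff _).1
      (hH ⟨x, hxH⟩ (by simpa [← Subtype.val_inj] using hx))
    refine ⟨m + n, fun hxD => hn ?_⟩
    exact (mem_map_iff_mem H.subtype_injective).1 (derivedSeries_add_le_map_derivedSeries hm n hxD)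
  · exact ⟨m, fun hxD => hxH (hm hxD)⟩
end

section
/- For the Artin braid group Bₙ with n ≥ 3, the second and third terms of the lower central series coincide: Γ₂(Bₙ) = Γ₃(Bₙ). -/
universe u

/-- The braid relations on `n - 1` generators `σ₀, …, σ_{n-2}`:
`σᵢσⱼ = σⱼσᵢ` for `|i - j| ≥ 2` and `σᵢσᵢ₊₁σᵢ = σᵢ₊₁σᵢσᵢ₊₁`. -/
def braidRels (n : ℕ) : Set (FreeGroup (Fin (n - 1))) :=
  {r | (∃ i j : Fin (n - 1), (i : ℕ) + 2 ≤ (j : ℕ) ∧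
          r = FreeGroup.of i * FreeGroup.of j * (FreeGroup.of j * FreeGroup.of i)⁻¹) ∨
       (∃ i j : Fin (n - 1), (j : ℕ) = (i : ℕ) + 1 ∧
          r = FreeGroup.of i * FreeGroup.of j * FreeGroup.of i *
              (FreeGroup.of j * FreeGroup.of i * FreeGroup.of j)⁻¹)}

/-!
In the abelianization the braid relation `aba = bab` forces `a = b`, so all standard generators
of `Bₙ` have the same image there and `Bₙᵃᵇ` is cyclic. Put `Q = G ⧸ Γ₃(G)`: the map
`Q → Gᵃᵇ` has kernel `Γ₂(G)/Γ₃(G)`, which is central in `Q`. A group that is cyclic modulo a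
central subgroup is abelian, so `Γ₂(G) ≤ Γ₃(G)`.
-/

open Subgroup

theorem Fin.apply_eq_apply_of_forall_succ {α : Type*} {m : ℕ} {f : Fin m → α}
    (h : ∀ i j : Fin m, (j : ℕ) = i + 1 → f i = f j) (i j : Fin m) : f i = f j := by
  have eq_zero : ∀ (k : ℕ) (hk : k < m), f ⟨k, hk⟩ = f ⟨0, by omega⟩ := by
    intro k
    induction k with
    | zero => intro _; rfl
    | succ k ih => intro hk; rw [← h ⟨k, by omega⟩ ⟨k + 1, hk⟩ rfl, ih]
  exact (eq_zero i i.2).trans (eq_zero j j.2).symm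

section

variable {G : Type*} [Group G]

theorem isCyclic_of_closure_eq_top_of_subsingleton {S : Set G} (hS : closure S = ⊤)
    (hsub : S.Subsingleton) : IsCyclic G := by
  rcases hsub.eq_empty_or_singleton with rfl | ⟨g, rfl⟩
  · rw [Subgroup.closure_empty] at hS
    have := Subgroup.subsingleton_iff.mp (subsingleton_of_bot_eq_top hS)
    infer_instance
  · exact isCyclic_iff_exists_zpowers_eq_top.mpr ⟨g, by rwa [zpowers_eq_closure]⟩

theorem Abelianization.of_eq_of_braid {a b : G} (h : a * b * a = b * a * b) :
    of a = of b := by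
  have h' := congrArg of h
  simp only [map_mul] at h'
  apply mul_left_cancel (a := of a * of b)
  calc of a * of b * of a = of b * of a * of b := h'
    _ = of a * of b * of b := by rw [mul_comm (of b) (of a)]

theorem Abelianization.isCyclic_of_forall_of_eq {S : Set G} (hS : closure S = ⊤)
    (h : ∀ a ∈ S, ∀ b ∈ S, of a = of b) : IsCyclic (Abelianization G) := by
  refine isCyclic_of_closure_eq_top_of_subsingleton (S := of '' S) ?_ ?_
  · rw [← MonoidHom.map_closure, hS, map_top_of_surjective _ QuotientGroup.mk_surjective]
  · rintro _ ⟨a, ha, rfl⟩ _ ⟨b, hb, rfl⟩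
    exact h a ha b hb

theorem top_lowerCentralSeries_one_eq_two_of_isCyclic [IsCyclic (Abelianization G)] :
    (⊤ : Subgroup G).lowerCentralSeries 1 = (⊤ : Subgroup G).lowerCentralSeries 2 := by
  set N := (⊤ : Subgroup G).lowerCentralSeries 2
  have hN : N ≤ commutator G := Subgroup.lowerCentralSeries_antitone ⊤ one_le_two
  refine le_antisymm ?_ hN
  rw [top_lowerCentralSeries_one, ← Normal.quotient_commutative_iff_commutator_le]
  refine (QuotientGroup.lift N Abelianization.of (Abelianization.ker_of G ▸ hN))
    |>.isMulCommutative_of_isCyclic_of_ker_le_center ?_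
  intro x hx
  induction x using QuotientGroup.induction_on with | H g => ?_
  have hg : g ∈ commutator G := by
    rw [← Abelianization.ker_of, MonoidHom.mem_ker]
    simpa using hx
  refine mem_center_iff.mpr fun y ↦ ?_
  induction y using QuotientGroup.induction_on with | H h => ?_
  refine (commutatorElement_eq_one_iff_mul_comm.mp ?_).symm
  exact (QuotientGroup.eq_one_iff _).mpr (commutator_mem_commutator hg (mem_top h))

end

theorem PresentedGroup.braidRels_of_mul_of_mul_of {n : ℕ} {i j : Fin (n - 1)}
    (hij : (j : ℕ) = i + 1) :
    (of i * of j * of i : PresentedGroup (braidRels n)) = of j * of i * of j :=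
  mk_eq_mk_of_mul_inv_mem (Or.inr ⟨i, j, hij, rfl⟩)

theorem stmt14_general (n : ℕ) :
    (⊤ : Subgroup (PresentedGroup (braidRels n))).lowerCentralSeries 1 =
      (⊤ : Subgroup (PresentedGroup (braidRels n))).lowerCentralSeries 2 := by
  have : IsCyclic (Abelianization (PresentedGroup (braidRels n))) := by
    refine Abelianization.isCyclic_of_forall_of_eq (PresentedGroup.closure_range_of _) ?_
    rintro _ ⟨i, rfl⟩ _ ⟨j, rfl⟩
    exact Fin.apply_eq_apply_of_forall_succ
      (fun i j hij ↦ Abelianization.of_eq_of_braid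
        (PresentedGroup.braidRels_of_mul_of_mul_of hij)) i j
  exact top_lowerCentralSeries_one_eq_two_of_isCyclic

/-- For the Artin braid group `Bₙ`, `n ≥ 3`, one has `Γ₂(Bₙ) = Γ₃(Bₙ)`.
(`Γ₁(G) = G` corresponds to `lowerCentralSeries G 0`.) -/
theorem stmt14 (n : ℕ) (hn : 3 ≤ n) :
    (⊤ : Subgroup (PresentedGroup (braidRels n))).lowerCentralSeries 1 =
      (⊤ : Subgroup (PresentedGroup (braidRels n))).lowerCentralSeries 2 :=
  stmt14_general n
end
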